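/- arXiv:2208.01042 — 3 statements merged into one kernel-verified Lean document; each statement's English description precedes it below -/
import Mathlib

section
/- Let m ≥ 3. If m is even, the distance matrix of the co-centralizer graph of D_{2m} (the star K_{1,m/2}) has eigenvalue −2 with multiplicity m/2 − 1 and eigenvalues (m/2 − 1) ± (1/2)√(m²−2m+4), each with multiplicity 1. If m is odd, the distance matrix of the co-centralizer graph of D_{2m} (the star K_{1,m}) has eigenvalue −2 with multiplicity m − 1 and eigenvalues (m−1) ± √(m²−m+1), each with multiplicity 1. -/
/-!
The distance matrix of the star `K_{1,n}` is `[[0, 𝟙ᵀ], [𝟙, 2(J - I)]]`. Taking the Schur complement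
of the centre in `tI - D` (for `t ≠ 0`) leaves `(t + 2)I - (2 + t⁻¹)J`, whose determinant the matrix
determinant lemma gives for `t ≠ -2`. Hence the characteristic polynomial agrees with
`(X + 2)^(n-1) (X² - 2(n-1)X - n)` at all but two points, so everywhere, and the quadratic factor has the
simple roots `(n - 1) ± √(n² - n + 1)`, distinct from `-2`. For even `m = 2k` the stated roots are
those for `n = k`, since `√(m² - 2m + 4) = 2√(k² - k + 1)`.
-/

open Polynomial

/-- The star graph `K_{1,n}` on `n+1` vertices. -/
def starGraph (n : ℕ) : SimpleGraph (Fin 1 ⊕ Fin n) :=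
  completeBipartiteGraph (Fin 1) (Fin n)

/-- The distance matrix of a graph. -/
noncomputable def distMatrix {V : Type*} [Fintype V] (G : SimpleGraph V) : Matrix V V ℝ :=
  Matrix.of fun u v => (G.dist u v : ℝ)

namespace SimpleGraph

variable {V W : Type*}

theorem completeBipartiteGraph_dist_inl_inr (a : V) (b : W) :
    (completeBipartiteGraph V W).dist (.inl a) (.inr b) = 1 :=
  dist_eq_one_iff_adj.mpr (by simp)

theorem completeBipartiteGraph_dist_inr_inl (b : W) (a : V) :
    (completeBipartiteGraph V W).dist (.inr b) (.inl a) = 1 :=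
  dist_eq_one_iff_adj.mpr (by simp)

theorem completeBipartiteGraph_dist_inr_inr [Nonempty V] {b b' : W} (h : b ≠ b') :
    (completeBipartiteGraph V W).dist (.inr b) (.inr b') = 2 := by
  obtain ⟨a⟩ := ‹Nonempty V›
  have : (completeBipartiteGraph V W).edist (.inr b) (.inr b') = 2 :=
    edist_eq_two_iff.mpr ⟨by simpa, by simp, ⟨.inl a, by simp [mem_commonNeighbors]⟩⟩
  rw [dist, this]
  rfl

end SimpleGraph

open Matrix

theorem distMatrix_starGraph (n : ℕ) :
    distMatrix (starGraph n) =
      fromBlocks 0 (of fun _ _ => 1) (of fun _ _ => 1) (of fun i j => if i = j then 0 else 2) := by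
  ext (a | i) (b | j)
  · simp [distMatrix, Subsingleton.elim a b]
  · simp [distMatrix, starGraph, SimpleGraph.completeBipartiteGraph_dist_inl_inr]
  · simp [distMatrix, starGraph, SimpleGraph.completeBipartiteGraph_dist_inr_inl]
  · obtain rfl | h := eq_or_ne i j
    · simp [distMatrix]
    · simp [distMatrix, starGraph, SimpleGraph.completeBipartiteGraph_dist_inr_inr h, h]

theorem Matrix.det_smul_one_add_of_const {K ι : Type*} [Field K] [Fintype ι] [DecidableEq ι]
    {a : K} (ha : a ≠ 0) (b : K) :
    det (a • 1 + of fun _ _ : ι => b) = a ^ Fintype.card ι * (1 + Fintype.card ι * (b / a)) := by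
  have : a • 1 + of (fun _ _ : ι => b) =
      a • (1 + replicateCol Unit (fun _ : ι => b / a) * replicateRow Unit (fun _ : ι => (1 : K))) := by
    ext i j
    simp [mul_add, mul_apply, mul_div_cancel₀ b ha]
  rw [this, det_smul, det_one_add_replicateCol_mul_replicateRow]
  simp [dotProduct]

theorem Polynomial.X_sq_sub_C_mul_X_sub_C_eq_mul {R : Type*} [CommRing R] {b c s : R}
    (hs : s ^ 2 = b ^ 2 + c) :
    X ^ 2 - C (2 * b) * X - C c = (X - C (b + s)) * (X - C (b - s)) := by
  have hC : C s ^ 2 = C b ^ 2 + C c := by simpa using congrArg C hs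
  simp only [C_add, C_sub, C_mul, C_ofNat]
  linear_combination hC

theorem Polynomial.rootMultiplicity_multiset_prod_X_sub_C {R : Type*} [CommRing R] [IsDomain R]
    [DecidableEq R] (s : Multiset R) (a : R) :
    ((s.map fun x => X - C x).prod).rootMultiplicity a = s.count a := by
  rw [← count_roots, roots_multiset_prod_X_sub_C]

theorem eval_charpoly_distMatrix_starGraph {n : ℕ} (hn : 1 ≤ n) {t : ℝ} (h0 : t ≠ 0)
    (h2 : t + 2 ≠ 0) :
    (distMatrix (starGraph n)).charpoly.eval t =
      (t + 2) ^ (n - 1) * (t ^ 2 - 2 * (n - 1) * t - n) := by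
  have hblocks : scalar _ t - distMatrix (starGraph n) =
      fromBlocks (scalar (Fin 1) t) (of fun _ _ => -1) (of fun _ _ => -1)
        ((t + 2) • 1 + of fun _ _ => -2) := by
    rw [distMatrix_starGraph]
    ext (a | i) (b | j)
    · simp [Subsingleton.elim a b]
    · simp
    · simp
    · obtain rfl | h := eq_or_ne i j <;> simp [*]
  let _ : Invertible (scalar (Fin 1) t) := ⟨scalar _ t⁻¹, by simp [h0], by simp [h0]⟩
  have hschur : (t + 2) • 1 + of (fun _ _ => -2) - (of fun _ _ => -1 : Matrix (Fin n) (Fin 1) ℝ) *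
      ⅟(scalar (Fin 1) t) * (of fun _ _ => -1 : Matrix (Fin 1) (Fin n) ℝ) =
      (t + 2) • 1 + of fun _ _ => -2 - t⁻¹ := by
    rw [show ⅟(scalar (Fin 1) t) = scalar _ t⁻¹ from rfl]
    ext i j
    simp [mul_apply]
    ring
  rw [eval_charpoly, hblocks, det_fromBlocks₁₁, hschur, det_smul_one_add_of_const h2]
  obtain ⟨k, rfl⟩ := Nat.exists_eq_add_of_le' hn
  simp only [det_unique, scalar_apply, diagonal_apply_eq, Fintype.card_fin, Nat.add_sub_cancel]
  field_simp
  push_cast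
  ring

theorem charpoly_distMatrix_starGraph {n : ℕ} (hn : 1 ≤ n) :
    (distMatrix (starGraph n)).charpoly =
      (X + C 2) ^ (n - 1) * (X ^ 2 - C (2 * ((n : ℝ) - 1)) * X - C (n : ℝ)) := by
  apply eq_of_infinite_eval_eq
  refine ((Set.finite_singleton (-2 : ℝ)).insert 0).infinite_compl.mono fun t ht => ?_
  simp only [Set.mem_compl_iff, Set.mem_insert_iff, Set.mem_singleton_iff, not_or] at ht
  rw [Set.mem_ofPred_eq, eval_charpoly_distMatrix_starGraph hn ht.1 fun h => ht.2 (by linarith)]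
  simp

theorem rootMultiplicity_charpoly_distMatrix_starGraph {n : ℕ} (hn : 1 ≤ n) :
    (distMatrix (starGraph n)).charpoly.rootMultiplicity (-2) = n - 1 ∧
    (distMatrix (starGraph n)).charpoly.rootMultiplicity
      (((n : ℝ) - 1) + Real.sqrt ((n : ℝ) ^ 2 - n + 1)) = 1 ∧
    (distMatrix (starGraph n)).charpoly.rootMultiplicity
      (((n : ℝ) - 1) - Real.sqrt ((n : ℝ) ^ 2 - n + 1)) = 1 := by
  set s := Real.sqrt ((n : ℝ) ^ 2 - n + 1)
  have hn' : (1 : ℝ) ≤ n := by exact_mod_cast hn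
  have hs : s ^ 2 = ((n : ℝ) - 1) ^ 2 + n := by
    rw [Real.sq_sqrt (by nlinarith)]
    ring
  have hs_pos : 0 < s := Real.sqrt_pos.mpr (by nlinarith)
  have hplus : (n - 1 : ℝ) + s ≠ -2 := by linarith
  have hminus : (n - 1 : ℝ) - s ≠ -2 := fun h => by nlinarith [hs]
  have hpm : (n - 1 : ℝ) + s ≠ n - 1 - s := by linarith
  have hprod : (distMatrix (starGraph n)).charpoly =
      ((Multiset.replicate (n - 1) (-2) + {(n - 1 : ℝ) + s, (n - 1 : ℝ) - s}).map
        fun x => X - C x).prod := by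
    rw [charpoly_distMatrix_starGraph hn, X_sq_sub_C_mul_X_sub_C_eq_mul hs]
    simp [Multiset.map_replicate]
    ring
  simp only [hprod, rootMultiplicity_multiset_prod_X_sub_C]
  simp [Multiset.count_replicate, hplus.symm, hminus.symm, hpm, hpm.symm]

theorem dihedral_cocentralizer_distance_spectrum (m : ℕ) (hm : 3 ≤ m) :
    (Even m →
      (distMatrix (starGraph (m / 2))).charpoly.rootMultiplicity (-2) = m / 2 - 1 ∧
      (distMatrix (starGraph (m / 2))).charpoly.rootMultiplicity
        (((m : ℝ) / 2 - 1) + (1 / 2) * Real.sqrt ((m : ℝ) ^ 2 - 2 * m + 4)) = 1 ∧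
      (distMatrix (starGraph (m / 2))).charpoly.rootMultiplicity
        (((m : ℝ) / 2 - 1) - (1 / 2) * Real.sqrt ((m : ℝ) ^ 2 - 2 * m + 4)) = 1) ∧
    (Odd m →
      (distMatrix (starGraph m)).charpoly.rootMultiplicity (-2) = m - 1 ∧
      (distMatrix (starGraph m)).charpoly.rootMultiplicity
        (((m : ℝ) - 1) + Real.sqrt ((m : ℝ) ^ 2 - m + 1)) = 1 ∧
      (distMatrix (starGraph m)).charpoly.rootMultiplicity
        (((m : ℝ) - 1) - Real.sqrt ((m : ℝ) ^ 2 - m + 1)) = 1) := by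
  refine ⟨fun ⟨k, hk⟩ => ?_, fun _ => rootMultiplicity_charpoly_distMatrix_starGraph (by omega)⟩
  have hmk : (m : ℝ) = 2 * k := by rw [hk]; push_cast; ring
  have hsqrt : Real.sqrt ((m : ℝ) ^ 2 - 2 * m + 4) = 2 * Real.sqrt ((k : ℝ) ^ 2 - k + 1) := by
    rw [hmk, show (2 * (k : ℝ)) ^ 2 - 2 * (2 * k) + 4 = 2 ^ 2 * (k ^ 2 - k + 1) by ring,
      Real.sqrt_mul (by positivity), Real.sqrt_sq zero_le_two]
  rw [show m / 2 = k by omega, hsqrt, hmk]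
  convert rootMultiplicity_charpoly_distMatrix_starGraph (n := k) (by omega) using 4 <;> ring
end

section
/- Let m ≥ 3. If m is even, the distance signless Laplacian matrix of the co-centralizer graph of D_{2m} (the star K_{1,m/2}) has eigenvalue m − 3 with multiplicity m/2 − 1 and eigenvalues (1/2)[(5m/2 − 3) ± √(9m²/4 − 7m + 9)], each with multiplicity 1. If m is odd, the distance signless Laplacian matrix of the co-centralizer graph of D_{2m} (the star K_{1,m}) has eigenvalue 2m − 3 with multiplicity m − 1 and eigenvalues (1/2)[(5m − 3) ± √(9m² − 14m + 9)], each with multiplicity 1. -/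
open Polynomial

/-- The diagonal matrix of transmissions (sums of distances to all other vertices). -/
noncomputable def transMatrix {V : Type*} [Fintype V] [DecidableEq V] (G : SimpleGraph V) :
    Matrix V V ℝ :=
  Matrix.diagonal fun v => ∑ u, (G.dist v u : ℝ)

/-- The distance signless Laplacian matrix `D^Q = Tr + D`. -/
noncomputable def distSignlessLapMatrix {V : Type*} [Fintype V] [DecidableEq V]
    (G : SimpleGraph V) : Matrix V V ℝ :=
  transMatrix G + distMatrix G

lemma star_adj_lr {n : ℕ} (a : Fin 1) (b : Fin n) : (starGraph n).Adj (Sum.inl a) (Sum.inr b) := by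
  simp [starGraph]

lemma star_dist_lr {n : ℕ} (a : Fin 1) (b : Fin n) :
    (starGraph n).dist (Sum.inl a) (Sum.inr b) = 1 :=
  SimpleGraph.dist_eq_one_iff_adj.mpr (star_adj_lr a b)

lemma star_dist_rl {n : ℕ} (a : Fin n) (b : Fin 1) :
    (starGraph n).dist (Sum.inr a) (Sum.inl b) = 1 :=
  SimpleGraph.dist_eq_one_iff_adj.mpr ((star_adj_lr b a).symm)

lemma star_dist_rr {n : ℕ} {a b : Fin n} (h : a ≠ b) :
    (starGraph n).dist (Sum.inr a) (Sum.inr b) = 2 := by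
  have h1 : (starGraph n).Adj (Sum.inr a) (Sum.inl 0) := (star_adj_lr 0 a).symm
  have h2 : (starGraph n).Adj (Sum.inl 0) (Sum.inr b) := star_adj_lr 0 b
  have hle : (starGraph n).dist (Sum.inr a) (Sum.inr b) ≤ 2 := by
    simpa using SimpleGraph.dist_le
      (SimpleGraph.Walk.cons h1 (SimpleGraph.Walk.cons h2 SimpleGraph.Walk.nil))
  have hne0 : (starGraph n).dist (Sum.inr a) (Sum.inr b) ≠ 0 := by
    rw [SimpleGraph.dist_ne_zero_iff_ne_and_reachable]
    exact ⟨by simpa using h,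
      ⟨SimpleGraph.Walk.cons h1 (SimpleGraph.Walk.cons h2 SimpleGraph.Walk.nil)⟩⟩
  have hne1 : (starGraph n).dist (Sum.inr a) (Sum.inr b) ≠ 1 := by
    rw [Ne, SimpleGraph.dist_eq_one_iff_adj]
    simp [starGraph]
  omega

noncomputable def Amat (n : ℕ) : Matrix (Fin 1 ⊕ Fin n) (Fin 2) ℝ :=
  Matrix.of (Sum.elim (fun _ => ![0, 1]) (fun _ => ![1, 0]))

noncomputable def Bmat (n : ℕ) : Matrix (Fin 2) (Fin 1 ⊕ Fin n) ℝ :=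
  Matrix.of fun j => Sum.elim (fun _ => ![(1 : ℝ), 3 - n] j) (fun _ => ![(2 : ℝ), 1] j)

lemma BA (n : ℕ) : Bmat n * Amat n = !![2 * (n : ℝ), 1; (n : ℝ), 3 - n] := by
  ext j k
  rw [Matrix.mul_apply, Fintype.sum_sum_type]
  fin_cases j <;> fin_cases k <;>
    simp [Amat, Bmat, Fin.sum_univ_one] <;> ring

lemma star_s2 {n : ℕ} (a : Fin n) :
    (∑ b : Fin n, ((starGraph n).dist (Sum.inr a) (Sum.inr b) : ℝ)) = 2 * n - 2 := by
  have key : ∀ b : Fin n, ((starGraph n).dist (Sum.inr a) (Sum.inr b) : ℝ)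
      = 2 - (if a = b then (2 : ℝ) else 0) := by
    intro b
    by_cases hab : a = b
    · simp [hab, SimpleGraph.dist_self]
    · simp [hab, star_dist_rr hab]
  rw [Finset.sum_congr rfl fun b _ => key b, Finset.sum_sub_distrib]
  simp [Finset.sum_ite_eq]
  ring

lemma star_decomp (n : ℕ) :
    distSignlessLapMatrix (starGraph n)
      = (2 * (n : ℝ) - 3) • 1 + Amat n * Bmat n := by
  ext v w
  cases v with
  | inl a =>
    have ha : a = 0 := Subsingleton.elim a 0
    subst ha
    cases w with
    | inl b =>
      have hb : b = 0 := Subsingleton.elim b 0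
      subst hb
      simp [distSignlessLapMatrix, transMatrix, distMatrix, Matrix.diagonal,
        SimpleGraph.dist_self, star_dist_lr, Matrix.mul_apply, Amat, Bmat,
        Matrix.one_apply, Fin.sum_univ_two]
      ring
    | inr b =>
      simp [distSignlessLapMatrix, transMatrix, distMatrix, Matrix.diagonal,
        star_dist_lr, Matrix.mul_apply, Amat, Bmat, Matrix.one_apply, Fin.sum_univ_two]
  | inr a =>
    cases w with
    | inl b =>
      have hb : b = 0 := Subsingleton.elim b 0
      subst hb
      simp [distSignlessLapMatrix, transMatrix, distMatrix, Matrix.diagonal,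
        star_dist_rl, Matrix.mul_apply, Amat, Bmat, Matrix.one_apply, Fin.sum_univ_two]
    | inr b =>
      by_cases hab : a = b
      · subst hab
        simp [distSignlessLapMatrix, transMatrix, distMatrix, Matrix.diagonal,
          SimpleGraph.dist_self, star_dist_rl, star_s2, Matrix.mul_apply, Amat, Bmat,
          Matrix.one_apply, Fin.sum_univ_two]
        ring
      · simp [distSignlessLapMatrix, transMatrix, distMatrix, Matrix.diagonal, hab,
          star_dist_rr hab, Matrix.mul_apply, Amat, Bmat, Matrix.one_apply,
          Fin.sum_univ_two]

lemma eval_charpoly' {V : Type*} [Fintype V] [DecidableEq V] (M : Matrix V V ℝ) (x : ℝ) :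
    eval x M.charpoly = (x • (1 : Matrix V V ℝ) - M).det := by
  rw [Matrix.charpoly, ← coe_evalRingHom, RingHom.map_det]
  congr 1
  ext i j
  by_cases h : i = j
  · subst h
    simp [Matrix.charmatrix_apply_eq, Matrix.one_apply]
  · simp [Matrix.charmatrix_apply_ne _ _ _ h, Matrix.one_apply, h]

lemma star_charpoly (n : ℕ) (hn : 1 ≤ n) :
    (distSignlessLapMatrix (starGraph n)).charpoly
      = (X - C (2 * (n : ℝ) - 3)) ^ (n - 1)
        * (X ^ 2 - C (5 * (n : ℝ) - 3) * X + C (4 * (n : ℝ) ^ 2 - 4 * n)) := by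
  set M := distSignlessLapMatrix (starGraph n) with hMdef
  set A := Amat n
  set B := Bmat n
  have hM : M = (2 * (n : ℝ) - 3) • 1 + A * B := star_decomp n
  have hBA : B * A = !![2 * (n : ℝ), 1; (n : ℝ), 3 - n] := BA n
  clear_value M A B
  set a : ℝ := 2 * (n : ℝ) - 3 with ha
  clear_value a
  apply eq_of_infinite_eval_eq
  apply ((Set.finite_singleton a).infinite_compl).mono
  intro x hx
  simp only [Set.mem_compl_iff, Set.mem_singleton_iff] at hx
  show eval x M.charpoly = _
  have hs : x - a ≠ 0 := sub_ne_zero.mpr hx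
  set s : ℝ := x - a with hsdef
  have lhs : eval x M.charpoly = (s • (1 : Matrix (Fin 1 ⊕ Fin n) _ ℝ) - A * B).det := by
    rw [eval_charpoly', hM]
    congr 1
    rw [hsdef, sub_smul]
    abel
  have factor : s • (1 : Matrix (Fin 1 ⊕ Fin n) _ ℝ) - A * B
      = s • (1 + ((-s⁻¹) • A) * B) := by
    rw [smul_add, Matrix.smul_mul, smul_smul, show s * -s⁻¹ = -1 by field_simp,
      neg_one_smul, ← sub_eq_add_neg]
  have card : Fintype.card (Fin 1 ⊕ Fin n) = n + 1 := by simp [Nat.add_comm]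
  have det2 : (1 + B * ((-s⁻¹) • A)).det
      = (1 + (-s⁻¹) * (2 * n)) * (1 + (-s⁻¹) * (3 - n)) - ((-s⁻¹) * 1) * ((-s⁻¹) * n) := by
    rw [Matrix.mul_smul, hBA, Matrix.det_fin_two]
    simp [Matrix.one_apply]
  rw [lhs, factor, Matrix.det_smul, card, Matrix.det_one_add_mul_comm, det2]
  simp only [eval_mul, eval_pow, eval_sub, eval_add, eval_X, eval_C, ← hsdef]
  have hpow : s ^ (n + 1) = s ^ (n - 1) * s ^ 2 := by
    rw [← pow_add]
    congr 1
    omega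
  rw [hpow]
  have key : s ^ 2 * ((1 + (-s⁻¹) * (2 * n)) * (1 + (-s⁻¹) * (3 - n)) - ((-s⁻¹) * 1) * ((-s⁻¹) * n))
      = x ^ 2 - (5 * n - 3) * x + (4 * n ^ 2 - 4 * n) := by
    field_simp
    rw [hsdef, ha]
    ring
  rw [mul_assoc, key]

lemma star_spec (n : ℕ) (hn : 1 ≤ n) :
    (distSignlessLapMatrix (starGraph n)).charpoly.rootMultiplicity (2 * (n : ℝ) - 3) = n - 1 ∧
    (distSignlessLapMatrix (starGraph n)).charpoly.rootMultiplicity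
      ((1 / 2) * ((5 * (n : ℝ) - 3) + Real.sqrt (9 * (n : ℝ) ^ 2 - 14 * n + 9))) = 1 ∧
    (distSignlessLapMatrix (starGraph n)).charpoly.rootMultiplicity
      ((1 / 2) * ((5 * (n : ℝ) - 3) - Real.sqrt (9 * (n : ℝ) ^ 2 - 14 * n + 9))) = 1 := by
  have hp := star_charpoly n hn
  set p := (distSignlessLapMatrix (starGraph n)).charpoly with hpdef
  clear_value p
  set a : ℝ := 2 * (n : ℝ) - 3 with ha
  set D : ℝ := 9 * (n : ℝ) ^ 2 - 14 * n + 9 with hD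
  have hDpos : 0 < D := by nlinarith [sq_nonneg (3 * (n : ℝ) - 7 / 3)]
  set r₁ : ℝ := (1 / 2) * ((5 * (n : ℝ) - 3) + Real.sqrt D) with hr1
  set r₂ : ℝ := (1 / 2) * ((5 * (n : ℝ) - 3) - Real.sqrt D) with hr2
  have hsq : Real.sqrt D ^ 2 = D := Real.sq_sqrt hDpos.le
  have hsum : r₁ + r₂ = 5 * (n : ℝ) - 3 := by rw [hr1, hr2]; ring
  have hprod : r₁ * r₂ = 4 * (n : ℝ) ^ 2 - 4 * n := by
    rw [hr1, hr2]
    have : (1 / 2) * ((5 * (n : ℝ) - 3) + Real.sqrt D) * ((1 / 2) * ((5 * (n : ℝ) - 3) - Real.sqrt D))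
        = ((5 * (n : ℝ) - 3) ^ 2 - Real.sqrt D ^ 2) / 4 := by ring
    rw [this, hsq, hD]
    ring
  have hquad : (X ^ 2 - C (5 * (n : ℝ) - 3) * X + C (4 * (n : ℝ) ^ 2 - 4 * n))
      = (X - C r₁) * (X - C r₂) := by
    have expand : (X - C r₁) * (X - C r₂)
        = X ^ 2 - (C r₁ + C r₂) * X + C r₁ * C r₂ := by ring
    rw [expand, ← C_add, ← C_mul, hsum, hprod]
  have h25 : (2 * (n : ℝ) - 5) ≠ 0 := by
    intro h
    have h' : ((2 * n : ℕ) : ℝ) = 5 := by push_cast; linarith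
    have : 2 * n = 5 := by exact_mod_cast h'
    omega
  have hane : ∀ r : ℝ, r = r₁ ∨ r = r₂ → a ≠ r := by
    intro r hr
    have heval : (a - r₁) * (a - r₂) = (n : ℝ) * (5 - 2 * n) := by
      have : (a - r₁) * (a - r₂) = a ^ 2 - (r₁ + r₂) * a + r₁ * r₂ := by ring
      rw [this, hsum, hprod, ha]
      ring
    have hnz : (a - r₁) * (a - r₂) ≠ 0 := by
      rw [heval]
      have hn0 : (n : ℝ) ≠ 0 := by positivity
      intro h
      rcases mul_eq_zero.mp h with h | h
      · exact hn0 h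
      · apply h25; linarith
    rcases hr with rfl | rfl
    · intro h; apply hnz; rw [h]; ring
    · intro h; apply hnz; rw [h]; ring
  have hr12 : r₁ ≠ r₂ := by
    have : r₁ - r₂ = Real.sqrt D := by rw [hr1, hr2]; ring
    intro h
    rw [h, sub_self] at this
    exact (Real.sqrt_pos.mpr hDpos).ne' this.symm
  have hp' : p = (X - C a) ^ (n - 1) * ((X - C r₁) * (X - C r₂)) := by
    rw [hp, hquad]
  have hne2 : (X - C r₁) * (X - C r₂) ≠ 0 :=
    mul_ne_zero (X_sub_C_ne_zero r₁) (X_sub_C_ne_zero r₂)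
  have hne1 : (X - C a) ^ (n - 1) * ((X - C r₁) * (X - C r₂)) ≠ 0 :=
    mul_ne_zero (pow_ne_zero _ (X_sub_C_ne_zero a)) hne2
  have mf : ∀ x : ℝ, ((X - C a) ^ (n - 1)).rootMultiplicity x = if x = a then n - 1 else 0 := by
    intro x
    by_cases hx : x = a
    · rw [if_pos hx, hx, rootMultiplicity_X_sub_C_pow]
    · rw [if_neg hx, rootMultiplicity_eq_zero]
      simp only [IsRoot, eval_pow, eval_sub, eval_X, eval_C]
      exact pow_ne_zero _ (sub_ne_zero.mpr hx)
  have key : ∀ x : ℝ, p.rootMultiplicity x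
      = (if x = a then n - 1 else 0) + ((if x = r₁ then 1 else 0) + (if x = r₂ then 1 else 0)) := by
    intro x
    rw [hp', rootMultiplicity_mul hne1,
      rootMultiplicity_mul hne2, mf, rootMultiplicity_X_sub_C, rootMultiplicity_X_sub_C]
  refine ⟨?_, ?_, ?_⟩
  · rw [key a, if_pos rfl, if_neg (fun h => hane r₁ (Or.inl rfl) h),
      if_neg (fun h => hane r₂ (Or.inr rfl) h)]
    omega
  · rw [key r₁, if_neg (fun h => hane r₁ (Or.inl rfl) h.symm), if_pos rfl, if_neg hr12]
  · rw [key r₂, if_neg (fun h => hane r₂ (Or.inr rfl) h.symm), if_pos rfl,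
      if_neg (fun h => hr12 h.symm)]

theorem dihedral_cocentralizer_distance_signless_laplacian_spectrum (m : ℕ) (hm : 3 ≤ m) :
    (Even m →
      (distSignlessLapMatrix (starGraph (m / 2))).charpoly.rootMultiplicity ((m : ℝ) - 3) =
        m / 2 - 1 ∧
      (distSignlessLapMatrix (starGraph (m / 2))).charpoly.rootMultiplicity
        ((1 / 2) * ((5 * (m : ℝ) / 2 - 3) + Real.sqrt (9 * (m : ℝ) ^ 2 / 4 - 7 * m + 9))) = 1 ∧
      (distSignlessLapMatrix (starGraph (m / 2))).charpoly.rootMultiplicity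
        ((1 / 2) * ((5 * (m : ℝ) / 2 - 3) - Real.sqrt (9 * (m : ℝ) ^ 2 / 4 - 7 * m + 9))) = 1) ∧
    (Odd m →
      (distSignlessLapMatrix (starGraph m)).charpoly.rootMultiplicity (2 * (m : ℝ) - 3) =
        m - 1 ∧
      (distSignlessLapMatrix (starGraph m)).charpoly.rootMultiplicity
        ((1 / 2) * ((5 * (m : ℝ) - 3) + Real.sqrt (9 * (m : ℝ) ^ 2 - 14 * m + 9))) = 1 ∧
      (distSignlessLapMatrix (starGraph m)).charpoly.rootMultiplicity
        ((1 / 2) * ((5 * (m : ℝ) - 3) - Real.sqrt (9 * (m : ℝ) ^ 2 - 14 * m + 9))) = 1) := by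
  constructor
  · intro hme
    obtain ⟨k, hk⟩ := hme
    have hk2 : m = 2 * k := by omega
    have h2 : m / 2 = k := by omega
    have hmk : (m : ℝ) = 2 * k := by rw [hk2]; push_cast; ring
    have e1 : (m : ℝ) - 3 = 2 * (k : ℝ) - 3 := by rw [hmk]
    have e2 : 5 * (m : ℝ) / 2 - 3 = 5 * (k : ℝ) - 3 := by rw [hmk]; ring
    have e3 : 9 * (m : ℝ) ^ 2 / 4 - 7 * m + 9 = 9 * (k : ℝ) ^ 2 - 14 * k + 9 := by
      rw [hmk]; ring
    rw [h2, e1, e2, e3]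
    have := star_spec k (by omega)
    exact ⟨this.1, this.2.1, this.2.2⟩
  · intro _
    exact star_spec m (by omega)
end

section
/- Let k ≥ 2 and let T_k be the complete tripartite graph K_{2^k+1, 2^{k-1}(2^k+1), 2^{k-1}(2^k-1)}. The distance Laplacian matrix of T_k has eigenvalues: 0 with multiplicity 1; 3·2^{2k-1} + 3·2^{k-1} + 1 with multiplicity 2^{k-1}(2^k+1) − 1; 3·2^{2k-1} + 2^{k-1} + 1 with multiplicity 2^{k-1}(2^k−1) − 1; 2^{2k} + 2^{k+1} + 2 with multiplicity 2^k; and 2^{2k} + 2^k + 1 with multiplicity 2. In particular, T_k is distance Laplacian integral. -/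
/-!
Every pair of vertices of `K_{a,b,c}` is at distance at most `2`, so its distance Laplacian is
`L(K_n) + L(K_a ⊔ K_b ⊔ K_c)`, the sum of the Laplacians of the complete graph and of the
complement. Writing `L(K_n) = n • 1 - J` with `J` the all-ones matrix and `L` for the second
summand, `J * L = 0` gives the factorisation
`(Y • 1 + J) * (Y • 1 - L) = Y • (Y • 1 + J - L)`, so subtracting `J` from `L` only moves one
eigenvalue `0` of `L` to `-n`. The spectrum of `L` is that of three complete graphs, so the
eigenvalues are `0`, `n` twice and `n + p` with multiplicity `p - 1` for each part size `p`.
-/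

open Polynomial

/-- The part of a vertex of `Fin a ⊕ Fin b ⊕ Fin c`. -/
def tripart {a b c : ℕ} : Fin a ⊕ Fin b ⊕ Fin c → Fin 3
  | Sum.inl _ => 0
  | Sum.inr (Sum.inl _) => 1
  | Sum.inr (Sum.inr _) => 2

/-- The complete tripartite graph `K_{a,b,c}`. -/
def completeTripartiteGraph (a b c : ℕ) : SimpleGraph (Fin a ⊕ Fin b ⊕ Fin c) where
  Adj u v := tripart u ≠ tripart v
  symm := ⟨fun _ _ h => h.symm⟩
  loopless := ⟨fun _ h => h rfl⟩

/-- The distance Laplacian matrix `D^L = Tr - D`. -/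
noncomputable def distLapMatrix {V : Type*} [Fintype V] [DecidableEq V] (G : SimpleGraph V) :
    Matrix V V ℝ :=
  transMatrix G - distMatrix G

/-- The co-centralizer graph of `PSL(2, 2^k)`:
the complete tripartite graph `K_{2^k+1, 2^{k-1}(2^k+1), 2^{k-1}(2^k-1)}`. -/
def pslGraph (k : ℕ) :=
  completeTripartiteGraph (2 ^ k + 1) (2 ^ (k - 1) * (2 ^ k + 1)) (2 ^ (k - 1) * (2 ^ k - 1))

namespace Matrix

/-- The Laplacian `card n • 1 - J` of the complete graph on `n`. -/
def completeLap (n R : Type*) [Fintype n] [DecidableEq n] [CommRing R] : Matrix n n R :=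
  scalar n (Fintype.card n : R) - vecMulVec 1 1

variable {n R : Type*} [Fintype n] [DecidableEq n] [CommRing R]

theorem charpoly_neg_vecMulVec_one [Nonempty n] :
    (-vecMulVec 1 1 : Matrix n n R).charpoly =
      X ^ (Fintype.card n - 1) * (X + C (Fintype.card n : R)) := by
  rw [← neg_vecMulVec, charpoly_vecMulVec, neg_dotProduct, one_dotProduct_one, neg_smul,
    sub_neg_eq_add, smul_eq_C_mul, mul_add, ← pow_succ,
    Nat.sub_add_cancel Fintype.card_pos, mul_comm]

theorem charpoly_completeLap [Nonempty n] :
    (completeLap n R).charpoly = X * (X - C (Fintype.card n : R)) ^ (Fintype.card n - 1) := by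
  have h : completeLap n R = -vecMulVec 1 1 - scalar n (-(Fintype.card n : R)) := by
    rw [completeLap, map_neg, sub_neg_eq_add, neg_add_eq_sub]
  rw [h, charpoly_sub_scalar, charpoly_neg_vecMulVec_one]
  simp only [mul_comp, pow_comp, add_comp, X_comp, C_comp, map_neg, ← sub_eq_add_neg,
    sub_add_cancel, mul_comm]

theorem X_mul_charpoly_sub_vecMulVec_one [IsDomain R] [Nonempty n] {A : Matrix n n R}
    (hA : vecMulVec 1 1 * A = 0) :
    X * (A - vecMulVec 1 1).charpoly = (X + C (Fintype.card n : R)) * A.charpoly := by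
  have hprod : charmatrix (-vecMulVec 1 1) * charmatrix A =
      charmatrix 0 * charmatrix (A - vecMulVec 1 1) := by
    have hJX : (C : R →+* R[X]).mapMatrix (vecMulVec 1 1) * scalar n X =
        scalar n X * (C : R →+* R[X]).mapMatrix (vecMulVec 1 1) :=
      (scalar_commute _ (fun _ => Commute.all _ _) _).eq.symm
    have hJA : (C : R →+* R[X]).mapMatrix (vecMulVec 1 1) * (C : R →+* R[X]).mapMatrix A = 0 := by
      rw [← map_mul, hA, map_zero]
    simp only [charmatrix, map_neg, map_sub, map_zero, sub_zero, sub_neg_eq_add, add_mul, mul_sub,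
      hJA, hJX]
    abel
  have hdet : (-vecMulVec 1 1 : Matrix n n R).charpoly * A.charpoly =
      (0 : Matrix n n R).charpoly * (A - vecMulVec 1 1).charpoly := by
    simp only [charpoly, ← det_mul, hprod]
  rw [charpoly_neg_vecMulVec_one, charpoly_zero, ← pow_sub_one_mul Fintype.card_ne_zero,
    mul_assoc, mul_assoc] at hdet
  exact (mul_left_cancel₀ (pow_ne_zero _ X_ne_zero) hdet).symm

theorem charpoly_completeLap_add [IsDomain R] [Nonempty n] {A : Matrix n n R}
    (hA : vecMulVec 1 1 * A = 0) :
    (X - C (Fintype.card n : R)) * (completeLap n R + A).charpoly =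
      X * A.charpoly.comp (X - C (Fintype.card n : R)) := by
  have h : completeLap n R + A = A - vecMulVec 1 1 - scalar n (-(Fintype.card n : R)) := by
    rw [completeLap, map_neg, sub_neg_eq_add]; abel
  have hcomp := congrArg (·.comp (X - C (Fintype.card n : R))) (X_mul_charpoly_sub_vecMulVec_one hA)
  simp only [mul_comp, add_comp, X_comp, C_comp, sub_add_cancel] at hcomp
  rw [h, charpoly_sub_scalar, map_neg, ← sub_eq_add_neg, hcomp]

end Matrix

open Matrix

section CompleteTripartite

variable {a b c : ℕ}

theorem completeTripartiteGraph_dist (ha : 0 < a) (hb : 0 < b) (u v : Fin a ⊕ Fin b ⊕ Fin c) :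
    (completeTripartiteGraph a b c).dist u v =
      if u = v then 0 else if tripart u = tripart v then 2 else 1 := by
  split_ifs with huv htuv
  · simp [huv]
  · obtain ⟨w, hw⟩ : ∃ w : Fin a ⊕ Fin b ⊕ Fin c, tripart u ≠ tripart w := by
      rcases u with _ | _ | _
      exacts [⟨.inr (.inl ⟨0, hb⟩), by simp [tripart]⟩, ⟨.inl ⟨0, ha⟩, by simp [tripart]⟩,
        ⟨.inl ⟨0, ha⟩, by simp [tripart]⟩]
    have h2 : (completeTripartiteGraph a b c).edist u v = 2 :=
      SimpleGraph.edist_eq_two_iff.mpr ⟨huv, fun h => h htuv, w, hw, fun h => hw (htuv.trans h)⟩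
    simp [SimpleGraph.dist, h2]
  · exact SimpleGraph.dist_eq_one_iff_adj.mpr htuv

/-- The Laplacian of the complement `K_a ⊔ K_b ⊔ K_c` of `K_{a,b,c}`. -/
noncomputable def partLap (a b c : ℕ) : Matrix (Fin a ⊕ Fin b ⊕ Fin c) (Fin a ⊕ Fin b ⊕ Fin c) ℝ :=
  fromBlocks (completeLap (Fin a) ℝ) 0 0
    (fromBlocks (completeLap (Fin b) ℝ) 0 0 (completeLap (Fin c) ℝ))

theorem distLapMatrix_completeTripartiteGraph (ha : 0 < a) (hb : 0 < b) :
    distLapMatrix (completeTripartiteGraph a b c) = completeLap _ ℝ + partLap a b c := by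
  have hcard : ∀ {p : ℕ} (i : Fin p), ((Finset.univ \ {i}).card : ℝ) = p - 1 := fun i => by
    rw [Finset.card_univ_sdiff, Finset.card_singleton, Fintype.card_fin,
      Nat.cast_sub (Nat.one_le_of_lt i.pos), Nat.cast_one]
  ext u v
  simp only [distLapMatrix, transMatrix, distMatrix, Matrix.sub_apply, Matrix.add_apply,
    diagonal_apply, of_apply, completeTripartiteGraph_dist ha hb, Fintype.sum_sum_type]
  rcases u with i | i | i <;> rcases v with j | j | j <;>
    simp [completeLap, partLap, tripart, Finset.sum_ite, Finset.filter_not, Finset.filter_eq,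
      Matrix.natCast_apply, diagonal_apply] <;>
    split_ifs <;> simp [hcard] <;> ring

theorem vecMulVec_one_mul_partLap : vecMulVec 1 1 * partLap a b c = 0 := by
  ext u v
  rcases v with j | j | j <;>
    simp [mul_apply, Fintype.sum_sum_type, partLap, completeLap, Matrix.natCast_apply]

theorem charpoly_partLap (ha : 0 < a) (hb : 0 < b) (hc : 0 < c) :
    (partLap a b c).charpoly = X * (X - C (a : ℝ)) ^ (a - 1) * (X * (X - C (b : ℝ)) ^ (b - 1) *
      (X * (X - C (c : ℝ)) ^ (c - 1))) := by
  have hK : ∀ p, 0 < p → (completeLap (Fin p) ℝ).charpoly = X * (X - C (p : ℝ)) ^ (p - 1) := by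
    intro p hp
    have : Nonempty (Fin p) := ⟨⟨0, hp⟩⟩
    simpa using charpoly_completeLap (n := Fin p) (R := ℝ)
  simp [partLap, hK a ha, hK b hb, hK c hc]

theorem charpoly_distLapMatrix_completeTripartiteGraph (ha : 0 < a) (hb : 0 < b) (hc : 0 < c) :
    (distLapMatrix (completeTripartiteGraph a b c)).charpoly =
      X * (X - C ((a : ℝ) + b + c)) ^ 2 * (X - C ((a : ℝ) + b + c + a)) ^ (a - 1) *
        (X - C ((a : ℝ) + b + c + b)) ^ (b - 1) * (X - C ((a : ℝ) + b + c + c)) ^ (c - 1) := by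
  have : Nonempty (Fin a ⊕ Fin b ⊕ Fin c) := ⟨.inl ⟨0, ha⟩⟩
  have h := charpoly_completeLap_add (vecMulVec_one_mul_partLap (a := a) (b := b) (c := c))
  rw [← distLapMatrix_completeTripartiteGraph ha hb, charpoly_partLap ha hb hc] at h
  simp only [Fintype.card_sum, Fintype.card_fin, Nat.cast_add, mul_comp, pow_comp, X_comp,
    sub_comp, C_comp, sub_sub, ← C_add] at h
  refine mul_left_cancel₀ (X_sub_C_ne_zero ((a : ℝ) + (b + c))) (h.trans ?_)
  ring_nf

theorem roots_charpoly_distLapMatrix_completeTripartiteGraph (ha : 0 < a) (hb : 0 < b)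
    (hc : 0 < c) :
    (distLapMatrix (completeTripartiteGraph a b c)).charpoly.roots =
      ({0} + 2 • {a + b + c} + (a - 1) • {a + b + c + a} + (b - 1) • {a + b + c + b} +
        (c - 1) • {a + b + c + c} : Multiset ℕ).map Nat.cast := by
  rw [charpoly_distLapMatrix_completeTripartiteGraph ha hb hc]
  simp only [roots_mul, roots_pow, roots_X, roots_X_sub_C, ne_eq, mul_eq_zero, pow_eq_zero_iff',
    X_sub_C_ne_zero, X_ne_zero, false_and, or_self, not_false_eq_true, Multiset.map_add,
    Multiset.map_nsmul, Multiset.map_singleton, Nat.cast_add, Nat.cast_zero]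

theorem distLapMatrix_completeTripartiteGraph_spectrum (ha : 0 < a) (hb : 0 < b) (hc : 0 < c)
    (hab : a ≠ b) (hac : a ≠ c) (hbc : b ≠ c) :
    (distLapMatrix (completeTripartiteGraph a b c)).charpoly.rootMultiplicity 0 = 1 ∧
    (distLapMatrix (completeTripartiteGraph a b c)).charpoly.rootMultiplicity
      ((a + b + c + b : ℕ) : ℝ) = b - 1 ∧
    (distLapMatrix (completeTripartiteGraph a b c)).charpoly.rootMultiplicity
      ((a + b + c + c : ℕ) : ℝ) = c - 1 ∧
    (distLapMatrix (completeTripartiteGraph a b c)).charpoly.rootMultiplicity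
      ((a + b + c + a : ℕ) : ℝ) = a - 1 ∧
    (distLapMatrix (completeTripartiteGraph a b c)).charpoly.rootMultiplicity
      ((a + b + c : ℕ) : ℝ) = 2 ∧
    ∀ μ : ℝ, (distLapMatrix (completeTripartiteGraph a b c)).charpoly.IsRoot μ →
      ∃ z : ℤ, μ = z := by
  have hroots := roots_charpoly_distLapMatrix_completeTripartiteGraph ha hb hc
  set χ := (distLapMatrix (completeTripartiteGraph a b c)).charpoly
  have hcount : ∀ m : ℕ, χ.rootMultiplicity (m : ℝ) =
      ({0} + 2 • {a + b + c} + (a - 1) • {a + b + c + a} + (b - 1) • {a + b + c + b} +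
        (c - 1) • {a + b + c + c} : Multiset ℕ).count m := fun m => by
    rw [← count_roots, hroots, Multiset.count_map_eq_count' _ _ Nat.cast_injective]
  have hcount0 := hcount 0
  rw [Nat.cast_zero] at hcount0
  refine ⟨hcount0.trans ?_, (hcount _).trans ?_, (hcount _).trans ?_, (hcount _).trans ?_,
    (hcount _).trans ?_, fun μ hμ => ?_⟩
  rotate_right
  · rw [← mem_roots (charpoly_monic _).ne_zero, hroots, Multiset.mem_map] at hμ
    obtain ⟨m, -, rfl⟩ := hμ
    exact ⟨m, rfl⟩
  all_goals
    simp only [Multiset.count_add, Multiset.count_nsmul, Multiset.count_singleton]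
    split_ifs <;> omega

end CompleteTripartite

theorem pslGraph_part_sizes_lt {m : ℕ} (hm : 1 ≤ m) :
    2 ^ (m + 1) + 1 < 2 ^ m * (2 ^ (m + 1) - 1) ∧
      2 ^ m * (2 ^ (m + 1) - 1) < 2 ^ m * (2 ^ (m + 1) + 1) := by
  have hx : 2 ≤ 2 ^ m := Nat.le_self_pow (by omega) 2
  have h2 : 2 ^ (m + 1) = 2 * 2 ^ m := by ring
  obtain ⟨y, hy⟩ : ∃ y, 2 ^ (m + 1) - 1 = y + 3 := ⟨2 ^ (m + 1) - 4, by omega⟩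
  rw [hy]
  exact ⟨by nlinarith, Nat.mul_lt_mul_of_pos_left (by omega) (by positivity)⟩

theorem psl_cocentralizer_distance_laplacian_spectrum (k : ℕ) (hk : 2 ≤ k) :
    (distLapMatrix (pslGraph k)).charpoly.rootMultiplicity 0 = 1 ∧
    (distLapMatrix (pslGraph k)).charpoly.rootMultiplicity
      (3 * (2 : ℝ) ^ (2 * k - 1) + 3 * 2 ^ (k - 1) + 1) = 2 ^ (k - 1) * (2 ^ k + 1) - 1 ∧
    (distLapMatrix (pslGraph k)).charpoly.rootMultiplicity
      (3 * (2 : ℝ) ^ (2 * k - 1) + 2 ^ (k - 1) + 1) = 2 ^ (k - 1) * (2 ^ k - 1) - 1 ∧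
    (distLapMatrix (pslGraph k)).charpoly.rootMultiplicity
      ((2 : ℝ) ^ (2 * k) + 2 ^ (k + 1) + 2) = 2 ^ k ∧
    (distLapMatrix (pslGraph k)).charpoly.rootMultiplicity
      ((2 : ℝ) ^ (2 * k) + 2 ^ k + 1) = 2 ∧
    ∀ μ : ℝ, (distLapMatrix (pslGraph k)).charpoly.IsRoot μ → ∃ z : ℤ, μ = z := by
  obtain ⟨m, rfl⟩ : ∃ m, k = m + 1 := ⟨k - 1, by omega⟩
  obtain ⟨hac, hcb⟩ := pslGraph_part_sizes_lt (by omega : 1 ≤ m)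
  obtain ⟨h0, hb, hc, ha, hn, hint⟩ := distLapMatrix_completeTripartiteGraph_spectrum
    (by positivity) (by positivity) ((Nat.succ_pos _).trans hac) (hac.trans hcb).ne hac.ne hcb.ne'
  rw [show pslGraph (m + 1) = completeTripartiteGraph (2 ^ (m + 1) + 1)
    (2 ^ m * (2 ^ (m + 1) + 1)) (2 ^ m * (2 ^ (m + 1) - 1)) from rfl,
    show 2 * (m + 1) - 1 = 2 * m + 1 by omega]
  simp only [Nat.add_sub_cancel] at ha ⊢
  refine ⟨h0, ?_, ?_, ?_, ?_, hint⟩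
  · convert hb using 2; push_cast [Nat.cast_sub Nat.one_le_two_pow]; ring
  · convert hc using 2; push_cast [Nat.cast_sub Nat.one_le_two_pow]; ring
  · convert ha using 2; push_cast [Nat.cast_sub Nat.one_le_two_pow]; ring
  · convert hn using 2; push_cast [Nat.cast_sub Nat.one_le_two_pow]; ring
end
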